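/- arXiv:1403.2846 — 8 statements merged into one kernel-verified Lean document; each statement's English description precedes it below -/
import Mathlib

section
/- Let B be an n×n matrix over a field and J the n×n all-ones matrix. Then for any scalar x, det(B + x·J) = det(B) + x·sum(adj(B)), where sum(K) denotes the sum of all entries of K and adj(B) is the adjugate matrix of B. -/
/-!
Since `x • J = vecMulVec (fun _ => x) (fun _ => 1)` is a rank-one update, the theorem is the
matrix determinant lemma `det (A + u vᵀ) = det A + vᵀ adj(A) u`, which holds over any commutative
ring. Expanding the determinant multilinearly in the rows, every term that takes two rows from
`u vᵀ` vanishes because those rows are proportional, and the term taking only row `i` from it is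
`u i * det (A with row i replaced by v) = u i * (vᵀ adj A) i` by Cramer's rule.
-/

open Matrix

theorem Fintype.sum_finset_eq_empty_add_sum_singleton {α M : Type*} [Fintype α] [DecidableEq α]
    [AddCommMonoid M] (f : Finset α → M) (hf : ∀ s, 1 < s.card → f s = 0) :
    ∑ s, f s = f ∅ + ∑ a, f {a} := by
  have hsmall : (Finset.univ.filter fun s : Finset α => s.card ≤ 1) =
      insert ∅ (Finset.univ.image singleton) := by
    ext s
    simp [Nat.le_one_iff_eq_zero_or_eq_one, Finset.card_eq_one, eq_comm]
  have hlarge (s) (_ : s ∈ Finset.univ) (hs : s ∉ Finset.univ.filter fun s => s.card ≤ 1) :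
      f s = 0 :=
    hf s (by simpa using hs)
  rw [← Finset.sum_subset (Finset.filter_subset _ _) hlarge, hsmall, Finset.sum_insert (by simp),
    Finset.sum_image fun _ _ _ _ => Finset.singleton_inj.mp]

namespace Matrix

variable {n R : Type*} [Fintype n] [DecidableEq n] [CommRing R]

theorem det_updateRow_eq_vecMul_adjugate (A : Matrix n n R) (i : n) (v : n → R) :
    (A.updateRow i v).det = (v ᵥ* A.adjugate) i := by
  rw [← cramer_transpose_apply, cramer_eq_adjugate_mulVec, ← adjugate_transpose, mulVec_transpose]

theorem det_eq_zero_of_rows_eq_smul (M : Matrix n n R) {a b : n} (hab : a ≠ b) {c d : R}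
    {w : n → R} (ha : M a = c • w) (hb : M b = d • w) : M.det = 0 := by
  have hM : M = (M.updateRow b (d • w)).updateRow a (c • w) := by
    rw [← ha, ← hb, updateRow_eq_self, updateRow_eq_self]
  rw [hM, det_updateRow_smul, ← updateRow_comm _ hab, det_updateRow_smul,
    det_zero_of_row_eq hab (by simp [updateRow_ne hab]), mul_zero, mul_zero]

theorem det_add_vecMulVec (A : Matrix n n R) (u v : n → R) :
    (A + vecMulVec u v).det = A.det + v ⬝ᵥ (A.adjugate *ᵥ u) := by
  let rowsA : n → n → R := fun i => A i
  let rows : n → n → R := fun i => u i • v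
  have hexpand : (A + vecMulVec u v).det =
      ∑ s : Finset n, detRowAlternating (s.piecewise rows rowsA) := by
    rw [add_comm]
    exact detRowAlternating.map_add_univ rows rowsA
  have hvanish (s : Finset n) (hs : 1 < s.card) :
      detRowAlternating (s.piecewise rows rowsA) = 0 := by
    obtain ⟨a, ha, b, hb, hab⟩ := Finset.one_lt_card.mp hs
    exact det_eq_zero_of_rows_eq_smul _ hab (Finset.piecewise_eq_of_mem _ _ _ ha)
      (Finset.piecewise_eq_of_mem _ _ _ hb)
  have hsingle (i : n) :
      detRowAlternating (({i} : Finset n).piecewise rows rowsA) = u i * (v ᵥ* A.adjugate) i := by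
    rw [Finset.piecewise_singleton]
    exact (det_updateRow_smul A i (u i) v).trans (by rw [det_updateRow_eq_vecMul_adjugate])
  rw [hexpand, Fintype.sum_finset_eq_empty_add_sum_singleton _ hvanish, Finset.piecewise_empty]
  simp only [hsingle, dotProduct_mulVec, dotProduct_comm _ u]
  rfl

end Matrix

/-- For an `n × n` matrix `B` over a field and the all-ones matrix `J`,
`det (B + x • J) = det B + x * sum (adjugate B)`, where `sum` is the sum of all entries. -/
theorem det_add_smul_allOnes {n : ℕ} {K : Type*} [Field K]
    (B : Matrix (Fin n) (Fin n) K) (x : K) :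
    (B + x • (Matrix.of fun _ _ => (1 : K))).det =
      B.det + x * ∑ i, ∑ j, B.adjugate i j := by
  have hJ : x • (Matrix.of fun _ _ => (1 : K)) =
      vecMulVec (fun _ : Fin n => x) (fun _ : Fin n => 1) := by
    ext
    simp [vecMulVec_apply]
  rw [hJ, det_add_vecMulVec]
  simp [dotProduct, mulVec, Finset.mul_sum, mul_comm]
end

section
/- Let G be a simple graph on n vertices and Q its signless Laplacian. Then the (i,j)-entry of Q^k equals the number of semi-edge walks of length k in G starting at vertex v_i and terminating at vertex v_j. -/
open Matrix BigOperators

/-- The signless Laplacian `Q(G) = D(G) + A(G)` of a simple graph. -/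
def signlessLaplacian {V : Type*} [Fintype V] [DecidableEq V]
    (G : SimpleGraph V) [DecidableRel G.Adj] : Matrix V V ℝ :=
  Matrix.diagonal (fun v => (G.degree v : ℝ)) + G.adjMatrix ℝ

/-- The number of semi-edge walks of length `k` in `G` from `i` to `j`.  A semi-edge
walk is an alternating sequence `v1, e1, v2, ..., vk, ek, v(k+1)` of vertices and edges
such that for each step both `vi` and `v(i+1)` are end-vertices (not necessarily
distinct) of the edge `ei`.  Hence a walk of length `k+1` starting at `i` chooses an
edge `e = {i, w}` incident with `i` (i.e. a neighbour `w` of `i`) and then a second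
end-vertex of `e` — either `i` itself or `w` — from which a semi-edge walk of length
`k` to `j` continues. -/
def semiEdgeWalkCount {V : Type*} [Fintype V] [DecidableEq V]
    (G : SimpleGraph V) [DecidableRel G.Adj] : ℕ → V → V → ℕ
  | 0, i, j => if i = j then 1 else 0
  | (k + 1), i, j =>
      ∑ w ∈ G.neighborFinset i, (semiEdgeWalkCount G k i j + semiEdgeWalkCount G k w j)

/-! Both sides satisfy the recursion `X (k+1) i j = deg i * X k i j + ∑ w ~ i, X k w j`:
for `Q ^ k` this is the row expansion of `Q * Q ^ k`, and for walks it records whether the first edge `{i, w}`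
is left at `i` (one choice per edge at `i`) or at `w`. -/

section

variable {V : Type*} [Fintype V] [DecidableEq V] (G : SimpleGraph V) [DecidableRel G.Adj]

theorem signlessLaplacian_mul_apply (M : Matrix V V ℝ) (i j : V) :
    (signlessLaplacian G * M) i j = G.degree i * M i j + ∑ w ∈ G.neighborFinset i, M w j := by
  rw [signlessLaplacian, add_mul, Matrix.add_apply, diagonal_mul, SimpleGraph.adjMatrix_mul_apply]

theorem semiEdgeWalkCount_succ (k : ℕ) (i j : V) :
    semiEdgeWalkCount G (k + 1) i j =
      G.degree i * semiEdgeWalkCount G k i j +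
        ∑ w ∈ G.neighborFinset i, semiEdgeWalkCount G k w j := by
  rw [semiEdgeWalkCount, Finset.sum_add_distrib, Finset.sum_const, G.card_neighborFinset_eq_degree,
    smul_eq_mul]

theorem signlessLaplacian_pow_apply (k : ℕ) (i j : V) :
    (signlessLaplacian G ^ k) i j = (semiEdgeWalkCount G k i j : ℝ) := by
  induction k generalizing i j with
  | zero => simp [semiEdgeWalkCount, one_apply]
  | succ k ih =>
    rw [pow_succ', signlessLaplacian_mul_apply, semiEdgeWalkCount_succ]
    push_cast
    simp only [ih]

end

/-- The `(i, j)` entry of `Q(G)^k` equals the number of semi-edge walks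
of length `k` in `G` starting at `i` and terminating at `j`. -/
theorem signlessLaplacian_pow_entry {n : ℕ} (G : SimpleGraph (Fin n))
    [DecidableRel G.Adj] (k : ℕ) (i j : Fin n) :
    (signlessLaplacian G ^ k) i j = (semiEdgeWalkCount G k i j : ℝ) :=
  signlessLaplacian_pow_apply G k i j
end

section
/- Let G_1 and G_2 be regular simple graphs of degrees r_1 and r_2 on n_1 and n_2 vertices respectively, and let G = G_1 ∨ G_2 be their join. Then the signless Laplacian characteristic polynomial of G satisfies f_Q(λ) = (1 - n_1·n_2/((λ - n_1 - 2r_2)(λ - n_2 - 2r_1))) · f_{Q_1}(λ - n_2) · f_{Q_2}(λ - n_1). -/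
open Matrix BigOperators

instance {α β : Type*} (G1 : SimpleGraph α) (G2 : SimpleGraph β)
    [DecidableRel G1.Adj] [DecidableRel G2.Adj] : DecidableRel (G1 ⊕g G2).Adj := fun x y => by
  cases x <;> cases y <;> simp only [SimpleGraph.sum_adj] <;> infer_instance

/-- The join `G1 ∨ G2` of two graphs: the disjoint union together with all edges between
the two vertex sets.  Equivalently, the complement of the disjoint sum of the complements. -/
def gJoin {α β : Type*} (G1 : SimpleGraph α) (G2 : SimpleGraph β) : SimpleGraph (α ⊕ β) :=
  (G1ᶜ ⊕g G2ᶜ)ᶜ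

instance {α β : Type*} [DecidableEq α] [DecidableEq β]
    (G1 : SimpleGraph α) (G2 : SimpleGraph β)
    [DecidableRel G1.Adj] [DecidableRel G2.Adj] : DecidableRel (gJoin G1 G2).Adj :=
  inferInstanceAs (DecidableRel (G1ᶜ ⊕g G2ᶜ)ᶜ.Adj)

/-!
Write `J` for all-ones matrices and `A = (λ - n₂)I - Q₁`, `B = (λ - n₁)I - Q₂`, whose row sums are
`μ = λ - n₂ - 2r₁` and `ν = λ - n₁ - 2r₂`; then `λI - Q = [[A, -J], [-J, B]]`.
Since `B J = ν J`, the matrix `Y = -ν⁻¹ J` solves `B Y = -J`, and right multiplication by the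
unipotent block matrix `[[I, 0], [-Y, I]]` makes `λI - Q` block triangular, with determinant
`det B · det (A - (n₂/ν) J)`. No inverse of `B` is needed, only `ν ≠ 0`.
The same trick applied to `[[1, 1ᵀ], [s 1, A]]` gives `det (A - s J) = (1 - s n₁/μ) det A`.
-/

namespace Matrix

section CommRing

variable {R : Type*} [CommRing R] {l m n : Type*} [Fintype m]

theorem mul_allOnes_of_sum_row_eq {A : Matrix l m R} {μ : R} (hA : ∀ i, ∑ j, A i j = μ) :
    A * (of fun _ _ => 1 : Matrix m n R) = μ • of fun _ _ => 1 := by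
  ext i k
  simp [mul_apply, hA]

theorem allOnes_mul_allOnes :
    (of fun _ _ => 1 : Matrix l m R) * (of fun _ _ => 1 : Matrix m n R) =
      (Fintype.card m : R) • of fun _ _ => 1 := by
  ext i k
  simp [mul_apply]

variable [DecidableEq m]

theorem sum_smul_one_sub_apply (A : Matrix m m R) (t : R) (i : m) :
    ∑ j, (t • 1 - A) i j = t - ∑ j, A i j := by
  simp [Finset.sum_sub_distrib, one_apply]

variable [Fintype n] [DecidableEq n]

theorem det_fromBlocks_of_mul_eq₂₂ (A : Matrix m m R) (B : Matrix m n R) (C : Matrix n m R)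
    (D : Matrix n n R) {Y : Matrix n m R} (hY : D * Y = C) :
    (fromBlocks A B C D).det = D.det * (A - B * Y).det := by
  have hmul : fromBlocks A B C D * fromBlocks 1 0 (-Y) 1 = fromBlocks (A - B * Y) B 0 D := by
    rw [fromBlocks_multiply, ← hY]
    simp [sub_eq_add_neg]
  have hunit : (fromBlocks (1 : Matrix m m R) 0 (-Y) 1).det = 1 := by
    simp
  simpa [hunit, det_fromBlocks_zero₂₁, mul_comm] using congrArg det hmul

end CommRing

variable {K : Type*} [Field K] {m n : Type*} [Fintype m] [Fintype n] [DecidableEq m]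
  [DecidableEq n]

theorem det_sub_smul_allOnes_of_sum_row_eq {A : Matrix m m K} {μ : K}
    (hA : ∀ i, ∑ j, A i j = μ) (hμ : μ ≠ 0) (s : K) :
    (A - s • of fun _ _ => 1).det = (1 - s * Fintype.card m / μ) * A.det := by
  let u : Matrix Unit m K := of fun _ _ => 1
  let v : Matrix m Unit K := of fun _ _ => 1
  have hY : A * ((s / μ) • v) = s • v := by
    rw [Matrix.mul_smul, mul_allOnes_of_sum_row_eq hA, smul_smul, div_mul_cancel₀ _ hμ]
  have h := det_fromBlocks_of_mul_eq₂₂ 1 u (s • v) A hY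
  rw [det_fromBlocks_one₁₁] at h
  calc (A - s • of fun _ _ => 1).det = (A - s • v * u).det := by
        rw [Matrix.smul_mul, allOnes_mul_allOnes, Fintype.card_unit, Nat.cast_one, one_smul]
    _ = A.det * (1 - u * ((s / μ) • v)).det := h
    _ = (1 - s * Fintype.card m / μ) * A.det := by
        rw [Matrix.mul_smul, allOnes_mul_allOnes, det_unique (1 - _ : Matrix Unit Unit K)]
        simp only [sub_apply, one_apply_eq, smul_apply, of_apply, smul_eq_mul]
        ring

theorem det_fromBlocks_neg_allOnes {A : Matrix m m K} {D : Matrix n n K} {μ ν : K}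
    (hA : ∀ i, ∑ j, A i j = μ) (hD : ∀ i, ∑ j, D i j = ν) (hμ : μ ≠ 0) (hν : ν ≠ 0) :
    (fromBlocks A (-of fun _ _ => 1) (-of fun _ _ => 1) D).det =
      (1 - Fintype.card m * Fintype.card n / (μ * ν)) * A.det * D.det := by
  have hY : D * ((-ν⁻¹) • (of fun _ _ => 1 : Matrix n m K)) = -of fun _ _ => 1 := by
    rw [Matrix.mul_smul, mul_allOnes_of_sum_row_eq hD, smul_smul, neg_mul, inv_mul_cancel₀ hν,
      neg_one_smul]
  rw [det_fromBlocks_of_mul_eq₂₂ _ _ _ _ hY, Matrix.neg_mul, Matrix.mul_smul, allOnes_mul_allOnes,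
    neg_smul, neg_neg, smul_smul, det_sub_smul_allOnes_of_sum_row_eq hA hμ]
  field_simp

end Matrix

namespace SimpleGraph

variable {V α β : Type*} [Fintype V] [DecidableEq V]

theorem sum_signlessLaplacian_apply_of_isRegularOfDegree (G : SimpleGraph V) [DecidableRel G.Adj]
    {r : ℕ} (hG : G.IsRegularOfDegree r) (v : V) :
    ∑ w, signlessLaplacian G v w = 2 * r := by
  have hadj := adjMatrix_mulVec_const_apply_of_regular (α := ℝ) (a := 1) hG (v := v)
  simp only [mulVec, dotProduct, Function.const_apply, mul_one] at hadj
  simp only [signlessLaplacian, Matrix.add_apply, Finset.sum_add_distrib, hadj, diagonal_apply,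
    Finset.sum_ite_eq, Finset.mem_univ, if_true, hG v]
  ring

variable (G1 : SimpleGraph α) (G2 : SimpleGraph β)

@[simp]
theorem gJoin_adj_inl_inl {a b : α} : (gJoin G1 G2).Adj (.inl a) (.inl b) ↔ G1.Adj a b := by
  simp only [gJoin, compl_adj, sum_adj, ne_eq, Sum.inl.injEq]
  have := fun h : G1.Adj a b => G1.ne_of_adj h
  tauto

@[simp]
theorem gJoin_adj_inr_inr {a b : β} : (gJoin G1 G2).Adj (.inr a) (.inr b) ↔ G2.Adj a b := by
  simp only [gJoin, compl_adj, sum_adj, ne_eq, Sum.inr.injEq]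
  have := fun h : G2.Adj a b => G2.ne_of_adj h
  tauto

@[simp]
theorem gJoin_adj_inl_inr {a : α} {b : β} : (gJoin G1 G2).Adj (.inl a) (.inr b) := by
  simp [gJoin]

@[simp]
theorem gJoin_adj_inr_inl {a : α} {b : β} : (gJoin G1 G2).Adj (.inr b) (.inl a) := by
  simp [gJoin]

variable [DecidableEq α] [DecidableEq β] [DecidableRel G1.Adj] [DecidableRel G2.Adj]

theorem adjMatrix_gJoin :
    (gJoin G1 G2).adjMatrix ℝ =
      fromBlocks (G1.adjMatrix ℝ) (of fun _ _ => 1) (of fun _ _ => 1) (G2.adjMatrix ℝ) := by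
  ext (a | b) (a' | b') <;> simp [adjMatrix_apply]

variable [Fintype α] [Fintype β]

theorem degree_gJoin_inl (a : α) :
    (gJoin G1 G2).degree (.inl a) = G1.degree a + Fintype.card β := by
  simp only [← card_neighborFinset_eq_degree, neighborFinset_eq_filter, Finset.card_filter,
    Fintype.sum_sum_type, gJoin_adj_inl_inl, gJoin_adj_inl_inr]
  simp

theorem degree_gJoin_inr (b : β) :
    (gJoin G1 G2).degree (.inr b) = G2.degree b + Fintype.card α := by
  simp only [← card_neighborFinset_eq_degree, neighborFinset_eq_filter, Finset.card_filter,
    Fintype.sum_sum_type, gJoin_adj_inr_inr, gJoin_adj_inr_inl]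
  simp [add_comm]

theorem smul_one_sub_signlessLaplacian_gJoin (t : ℝ) :
    t • 1 - signlessLaplacian (gJoin G1 G2) =
      fromBlocks ((t - Fintype.card β) • 1 - signlessLaplacian G1) (-of fun _ _ => 1)
        (-of fun _ _ => 1) ((t - Fintype.card α) • 1 - signlessLaplacian G2) := by
  ext (a | b) (a' | b') <;>
    simp [signlessLaplacian, adjMatrix_gJoin, degree_gJoin_inl, degree_gJoin_inr, one_apply, diagonal_apply] <;>
    split_ifs <;> ring

end SimpleGraph

/-- For `G1` an `r1`-regular graph on `n1` vertices and `G2` an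
`r2`-regular graph on `n2` vertices, the signless Laplacian characteristic polynomial of
the join `G = G1 ∨ G2` satisfies (away from the poles of the rational factor)
`f_Q(lam) = (1 - n1 n2 /((lam - n1 - 2 r2)(lam - n2 - 2 r1))) f_{Q1}(lam - n2) f_{Q2}(lam - n1)`. -/
theorem charpoly_join_regular {n1 n2 r1 r2 : ℕ}
    (G1 : SimpleGraph (Fin n1)) (G2 : SimpleGraph (Fin n2))
    [DecidableRel G1.Adj] [DecidableRel G2.Adj]
    (h1 : G1.IsRegularOfDegree r1) (h2 : G2.IsRegularOfDegree r2) (lam : ℝ)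
    (hden : (lam - n1 - 2 * r2) * (lam - n2 - 2 * r1) ≠ 0) :
    (lam • (1 : Matrix (Fin n1 ⊕ Fin n2) (Fin n1 ⊕ Fin n2) ℝ) -
        signlessLaplacian (gJoin G1 G2)).det =
      (1 - (n1 : ℝ) * n2 / ((lam - n1 - 2 * r2) * (lam - n2 - 2 * r1))) *
        (((lam - n2) • (1 : Matrix (Fin n1) (Fin n1) ℝ) - signlessLaplacian G1).det) *
        (((lam - n1) • (1 : Matrix (Fin n2) (Fin n2) ℝ) - signlessLaplacian G2).det) := by
  have hrow₁ (i : Fin n1) :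
      ∑ j, ((lam - n2) • 1 - signlessLaplacian G1) i j = lam - n2 - 2 * r1 := by
    rw [sum_smul_one_sub_apply, SimpleGraph.sum_signlessLaplacian_apply_of_isRegularOfDegree G1 h1]
  have hrow₂ (i : Fin n2) :
      ∑ j, ((lam - n1) • 1 - signlessLaplacian G2) i j = lam - n1 - 2 * r2 := by
    rw [sum_smul_one_sub_apply, SimpleGraph.sum_signlessLaplacian_apply_of_isRegularOfDegree G2 h2]
  rw [SimpleGraph.smul_one_sub_signlessLaplacian_gJoin, Fintype.card_fin, Fintype.card_fin,
    det_fromBlocks_neg_allOnes hrow₁ hrow₂ (right_ne_zero_of_mul hden) (left_ne_zero_of_mul hden)]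
  simp only [Fintype.card_fin, mul_comm (lam - n1 - 2 * r2)]
end

section
/- Let G be a simple connected graph on n vertices. If q_0 is an eigenvalue of the signless Laplacian Q(G) with multiplicity s ≥ 2, then n - 2 - q_0 is an eigenvalue of the signless Laplacian Q(Ḡ) of the complement, with multiplicity t satisfying s - 1 ≤ t ≤ s + 1. -/
/-!
Let `J` be the all-ones matrix. Since `Q(G) + Q(Ḡ) = (n - 2) I + J` and `J` kills every vector
orthogonal to `𝟙`, the eigenvectors of `Q(G)` for `q₀` that are orthogonal to `𝟙` are exactly the
eigenvectors of `Q(Ḡ)` for `n - 2 - q₀` orthogonal to `𝟙`. Intersecting an eigenspace with the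
hyperplane `𝟙ᗮ` lowers its dimension by at most one, and for the symmetric matrices `Q(G)`,
`Q(Ḡ)` geometric and algebraic multiplicities agree, so each multiplicity is at most the other
plus one.
-/

open Matrix BigOperators

open Module

namespace Module.End

variable {K V : Type*} [Field K] [AddCommGroup V] [Module K V] [FiniteDimensional K V]

lemma IsFinitelySemisimple.finrank_eigenspace_eq {f : End K V} (hf : f.IsFinitelySemisimple)
    (μ : K) : finrank K (f.eigenspace μ) = f.charpoly.rootMultiplicity μ := by
  rw [← hf.maxGenEigenspace_eq_eigenspace, LinearMap.finrank_maxGenEigenspace_eq]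

lemma finrank_le_finrank_inf_ker_add_one (p : Submodule K V) (ℓ : Dual K V) :
    finrank K p ≤ finrank K ↥(p ⊓ LinearMap.ker ℓ) + 1 := by
  rcases eq_or_ne ℓ 0 with rfl | hℓ
  · rw [LinearMap.ker_zero, inf_top_eq]
    omega
  have hsup := Submodule.finrank_sup_add_finrank_inf_eq p (LinearMap.ker ℓ)
  have hle := Submodule.finrank_le (p ⊔ LinearMap.ker ℓ)
  have hker := ℓ.finrank_ker_add_one_of_ne_zero hℓ
  omega

lemma rootMultiplicity_charpoly_le_of_eigenspace_inf_ker_le {f g : End K V}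
    (hf : f.IsFinitelySemisimple) (ℓ : Dual K V) {a b : K}
    (h : f.eigenspace a ⊓ LinearMap.ker ℓ ≤ g.eigenspace b) :
    f.charpoly.rootMultiplicity a ≤ g.charpoly.rootMultiplicity b + 1 := calc
  f.charpoly.rootMultiplicity a = finrank K (f.eigenspace a) := (hf.finrank_eigenspace_eq a).symm
  _ ≤ finrank K ↥(f.eigenspace a ⊓ LinearMap.ker ℓ) + 1 := finrank_le_finrank_inf_ker_add_one _ ℓ
  _ ≤ finrank K (g.eigenspace b) + 1 := by grw [Submodule.finrank_mono h]
  _ ≤ g.charpoly.rootMultiplicity b + 1 := by grw [LinearMap.finrank_eigenspace_le]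

end Module.End

namespace Matrix.IsHermitian

variable {𝕜 n : Type*} [RCLike 𝕜] [Fintype n] [DecidableEq n] {A : Matrix n n 𝕜}

lemma isSemisimple_toLin' (hA : A.IsHermitian) : Module.End.IsSemisimple (toLin' A) := by
  refine ((WithLp.linearEquiv 2 𝕜 (n → 𝕜)).symm.isSemisimple_iff _ (toEuclideanLin A) rfl).mpr ?_
  rw [← Module.End.isFinitelySemisimple_iff_isSemisimple]
  exact (isSymmetric_toEuclideanLin_iff.mpr hA).isFinitelySemisimple

lemma rootMultiplicity_charpoly_le_of_sum_eq_zero (hA : A.IsHermitian) (B : Matrix n n 𝕜)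
    {a b : 𝕜}
    (h : ∀ x : n → 𝕜, ∑ i, x i = 0 → A *ᵥ x = a • x → B *ᵥ x = b • x) :
    A.charpoly.rootMultiplicity a ≤ B.charpoly.rootMultiplicity b + 1 := by
  rw [← charpoly_toLin', ← charpoly_toLin' B]
  refine Module.End.rootMultiplicity_charpoly_le_of_eigenspace_inf_ker_le
    hA.isSemisimple_toLin'.isFinitelySemisimple (∑ i, LinearMap.proj i) ?_
  rintro x ⟨hAx, hx⟩
  simp only [Module.End.mem_eigenspace_iff, toLin'_apply, SetLike.mem_coe, LinearMap.mem_ker,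
    LinearMap.sum_apply, LinearMap.coe_proj, Function.eval] at *
  exact h x hx hAx

end Matrix.IsHermitian

namespace SimpleGraph

variable {V : Type*} [Fintype V] [DecidableEq V] (G : SimpleGraph V) [DecidableRel G.Adj]

lemma degree_add_degree_compl_add_one (v : V) :
    G.degree v + Gᶜ.degree v + 1 = Fintype.card V := by
  have := G.degree_lt_card_verts v
  rw [degree_compl]
  omega

lemma isHermitian_signlessLaplacian : (signlessLaplacian G).IsHermitian :=
  (G.isHermitian_degMatrix ℝ).add (G.isHermitian_adjMatrix ℝ)

lemma signlessLaplacian_add_compl :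
    signlessLaplacian G + signlessLaplacian Gᶜ =
      ((Fintype.card V : ℝ) - 2) • 1 + of fun _ _ ↦ 1 := by
  ext i j
  rcases eq_or_ne i j with rfl | hij
  · have hdeg : (G.degree i : ℝ) + Gᶜ.degree i + 1 = Fintype.card V := by
      exact_mod_cast G.degree_add_degree_compl_add_one i
    simp only [signlessLaplacian, Matrix.add_apply, diagonal_apply_eq, adjMatrix_apply,
      SimpleGraph.irrefl, ↓reduceIte, add_zero, Matrix.smul_apply, one_apply_eq, smul_eq_mul,
      mul_one, of_apply]
    linarith
  · by_cases hadj : G.Adj i j <;> simp [signlessLaplacian, hij, hadj]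

variable {G}

lemma signlessLaplacian_mulVec_add_compl {x : V → ℝ} (hx : ∑ i, x i = 0) :
    signlessLaplacian G *ᵥ x + signlessLaplacian Gᶜ *ᵥ x = ((Fintype.card V : ℝ) - 2) • x := by
  have hJ : (of fun _ _ ↦ (1 : ℝ) : Matrix V V ℝ) *ᵥ x = 0 := by
    ext i
    simp [mulVec, dotProduct, hx]
  rw [← add_mulVec, signlessLaplacian_add_compl, add_mulVec, hJ, add_zero, smul_mulVec,
    one_mulVec]

lemma signlessLaplacian_mulVec_eq_smul_iff_compl {x : V → ℝ} (hx : ∑ i, x i = 0) {q r : ℝ}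
    (hqr : q + r = Fintype.card V - 2) :
    signlessLaplacian G *ᵥ x = q • x ↔ signlessLaplacian Gᶜ *ᵥ x = r • x := by
  have h := signlessLaplacian_mulVec_add_compl (G := G) hx
  rw [← hqr, add_smul] at h
  constructor
  · intro hq
    rw [hq] at h
    exact add_left_cancel h
  · intro hr
    rw [hr] at h
    exact add_right_cancel h

end SimpleGraph

theorem multiplicity_compl_general {n : ℕ} (G : SimpleGraph (Fin n)) [DecidableRel G.Adj]
    (q₀ : ℝ) (s : ℕ)
    (hs : s = ((signlessLaplacian G).charpoly.rootMultiplicity q₀)) :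
    s - 1 ≤ (signlessLaplacian Gᶜ).charpoly.rootMultiplicity ((n : ℝ) - 2 - q₀) ∧
      (signlessLaplacian Gᶜ).charpoly.rootMultiplicity ((n : ℝ) - 2 - q₀) ≤ s + 1 := by
  have hqr : q₀ + ((n : ℝ) - 2 - q₀) = Fintype.card (Fin n) - 2 := by
    rw [Fintype.card_fin]
    ring
  have heig (x : Fin n → ℝ) (hx : ∑ i, x i = 0) :=
    G.signlessLaplacian_mulVec_eq_smul_iff_compl hx hqr
  subst hs
  constructor
  · have := G.isHermitian_signlessLaplacian.rootMultiplicity_charpoly_le_of_sum_eq_zero _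
      fun x hx ↦ (heig x hx).1
    omega
  · exact Gᶜ.isHermitian_signlessLaplacian.rootMultiplicity_charpoly_le_of_sum_eq_zero _
      fun x hx ↦ (heig x hx).2

/-- Let `G` be a simple connected graph on `n` vertices.  If `q₀` is an
eigenvalue of `Q(G)` with multiplicity `s ≥ 2` (multiplicity as a root of the
characteristic polynomial), then `n - 2 - q₀` is an eigenvalue of `Q(Gᶜ)` with
multiplicity `t` satisfying `s - 1 ≤ t ≤ s + 1`. -/
theorem multiplicity_compl {n : ℕ} (G : SimpleGraph (Fin n)) [DecidableRel G.Adj]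
    (hG : G.Connected) (q₀ : ℝ) (s : ℕ)
    (hs : s = ((signlessLaplacian G).charpoly.rootMultiplicity q₀))
    (hs2 : 2 ≤ s) :
    s - 1 ≤ (signlessLaplacian Gᶜ).charpoly.rootMultiplicity ((n : ℝ) - 2 - q₀) ∧
      (signlessLaplacian Gᶜ).charpoly.rootMultiplicity ((n : ℝ) - 2 - q₀) ≤ s + 1 :=
  multiplicity_compl_general G q₀ s hs
end

section
/- Let G be a simple graph on n vertices with signless Laplacian Q, and let λ be a real number that is not an eigenvalue of Q. Then the Q-coronal Γ_Q(λ) = 1^T(λI - Q)^{-1}1 satisfies Γ_Q(λ) = -1 + (-1)^n · f_{Q̄}(n - 2 - λ)/f_Q(λ), where f_Q and f_{Q̄} are the signless Laplacian characteristic polynomials of G and its complement Ḡ. -/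
open Matrix BigOperators

/-! Complementation acts on the signless Laplacian affinely: `Q(Ḡ) = (n - 2) I + J - Q(G)`.
Hence `(n - 2 - λ) I - Q(Ḡ) = -(λ I - Q(G) + J)`, and since `J = 𝟙 𝟙ᵀ` has rank one, the matrix
determinant lemma gives `det (M + J) = det M * (1 + 𝟙ᵀ M⁻¹ 𝟙)` for `M = λ I - Q(G)`. -/

namespace SimpleGraph

variable {V : Type*} [Fintype V] [DecidableEq V] (G : SimpleGraph V) [DecidableRel G.Adj]

theorem cast_degree_compl (v : V) :
    (Gᶜ.degree v : ℝ) = Fintype.card V - 1 - G.degree v := by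
  have hlt := G.degree_lt_card_verts v
  rw [degree_compl, Nat.cast_sub (by omega), Nat.cast_sub (by omega), Nat.cast_one]

theorem signlessLaplacian_compl :
    signlessLaplacian Gᶜ =
      ((Fintype.card V : ℝ) - 2) • (1 : Matrix V V ℝ) + of 1 - signlessLaplacian G := by
  ext i j
  rcases eq_or_ne i j with rfl | hij
  · simp only [signlessLaplacian, cast_degree_compl, Matrix.add_apply, diagonal_apply_eq,
      adjMatrix_apply, SimpleGraph.irrefl, ↓reduceIte, add_zero, Matrix.sub_apply,
      Matrix.smul_apply, one_apply_eq, smul_eq_mul, mul_one, of_apply, Pi.one_apply]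
    ring
  · by_cases hadj : G.Adj i j <;> simp [signlessLaplacian, hij, hadj]

end SimpleGraph

theorem Matrix.det_add_of_one {ι R : Type*} [Fintype ι] [DecidableEq ι] [CommRing R]
    {M : Matrix ι ι R} (hM : IsUnit M.det) :
    (M + of 1).det = M.det * (1 + ∑ i, ∑ j, M⁻¹ i j) := by
  have hJ : (of 1 : Matrix ι ι R) = vecMulVec 1 1 := by
    ext i j
    simp [vecMulVec_apply]
  rw [hJ, vecMulVec_eq Unit, det_add_replicateCol_mul_replicateRow hM, det_unique (1 + _)]
  simp [Matrix.mul_apply, Finset.sum_comm (γ := ι)]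

/-- For a simple graph `G` on `n` vertices with signless Laplacian `Q`
and `lam` not an eigenvalue of `Q`, the `Q`-coronal `Γ_Q(lam) = 1ᵀ (lam I - Q)⁻¹ 1`
equals `-1 + (-1)^n * f_{Q̄}(n - 2 - lam) / f_Q(lam)`, where `f_Q`, `f_{Q̄}` are the
signless Laplacian characteristic polynomials of `G` and of its complement. -/
theorem coronal_eq {n : ℕ} (G : SimpleGraph (Fin n)) [DecidableRel G.Adj] (lam : ℝ)
    (h : (lam • (1 : Matrix (Fin n) (Fin n) ℝ) - signlessLaplacian G).det ≠ 0) :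
    ∑ i, ∑ j, (lam • (1 : Matrix (Fin n) (Fin n) ℝ) - signlessLaplacian G)⁻¹ i j =
      -1 + (-1) ^ n *
        (((((n : ℝ) - 2 - lam) • (1 : Matrix (Fin n) (Fin n) ℝ) - signlessLaplacian Gᶜ).det) /
          ((lam • (1 : Matrix (Fin n) (Fin n) ℝ) - signlessLaplacian G).det)) := by
  set M := lam • (1 : Matrix (Fin n) (Fin n) ℝ) - signlessLaplacian G
  have hcompl : ((n : ℝ) - 2 - lam) • (1 : Matrix (Fin n) (Fin n) ℝ) - signlessLaplacian Gᶜ =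
      -(M + of 1) := by
    rw [G.signlessLaplacian_compl, Fintype.card_fin]
    module
  rw [hcompl, det_neg, Fintype.card_fin, det_add_of_one (isUnit_iff_ne_zero.2 h),
    mul_div_assoc, mul_div_cancel_left₀ _ h, ← mul_assoc, ← mul_pow]
  norm_num
end

section
/- Let G_1 be r_1-regular on n_1 vertices and G_2 be r_2-regular on n_2 vertices, and set G = G_1 ∨ G_2 (join), n = n_1 + n_2. Then for λ avoiding the relevant poles, the Q-coronal of G equals Γ_Q(λ) = ((λ - n_2 - 2r_1)n_2 + (λ - n_1 - 2r_2)n_1 + 2n_1n_2) / ((λ - n_2 - 2r_1)(λ - n_1 - 2r_2) - n_1n_2). -/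
open Matrix BigOperators

/-! The sum of the entries of `(λI - Q)⁻¹` is `∑ xᵢ` for the solution `x` of `(λI - Q) x = 𝟏`.
The two vertex classes of a join of regular graphs form an equitable partition: `Q` maps vectors
constant on each class to such vectors, acting through the quotient matrix
`[[n₂ + 2r₁, n₂], [n₁, n₁ + 2r₂]]`. So `x` takes values `a` on `G₁` and `b` on `G₂`, found from a
`2 × 2` system by Cramer's rule, and `n₁ a + n₂ b` is the stated rational function. -/

theorem Matrix.sum_sum_inv_apply_eq_sum_of_mulVec_eq_one {ι K : Type*} [Fintype ι]
    [DecidableEq ι] [Field K] {M : Matrix ι ι K} (hM : M.det ≠ 0) {x : ι → K}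
    (hx : M *ᵥ x = fun _ => 1) : ∑ i, ∑ j, M⁻¹ i j = ∑ i, x i := by
  have hinv : M⁻¹ *ᵥ (fun _ => 1) = x := by
    rw [← hx, mulVec_mulVec, nonsing_inv_mul M (isUnit_iff_ne_zero.mpr hM), one_mulVec]
  simp [← hinv, mulVec, dotProduct]

theorem signlessLaplacian_mulVec_apply {V : Type*} [Fintype V] [DecidableEq V]
    (G : SimpleGraph V) [DecidableRel G.Adj] (x : V → ℝ) (v : V) :
    (signlessLaplacian G *ᵥ x) v = G.degree v * x v + ∑ u ∈ G.neighborFinset v, x u := by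
  simp [signlessLaplacian, add_mulVec, mulVec_diagonal, SimpleGraph.adjMatrix_mulVec_apply]

namespace gJoin

variable {α β : Type*} (G1 : SimpleGraph α) (G2 : SimpleGraph β)

@[simp]
theorem adj_inl_inl {i j : α} : (gJoin G1 G2).Adj (.inl i) (.inl j) ↔ G1.Adj i j := by
  simp only [gJoin, SimpleGraph.compl_adj, SimpleGraph.sum_adj, ne_eq, Sum.inl.injEq]
  exact ⟨fun ⟨hne, h⟩ => not_not.mp fun hn => h ⟨hne, hn⟩,
    fun h => ⟨G1.ne_of_adj h, fun h' => h'.2 h⟩⟩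

@[simp]
theorem adj_inr_inr {i j : β} : (gJoin G1 G2).Adj (.inr i) (.inr j) ↔ G2.Adj i j := by
  simp only [gJoin, SimpleGraph.compl_adj, SimpleGraph.sum_adj, ne_eq, Sum.inr.injEq]
  exact ⟨fun ⟨hne, h⟩ => not_not.mp fun hn => h ⟨hne, hn⟩,
    fun h => ⟨G2.ne_of_adj h, fun h' => h'.2 h⟩⟩

@[simp]
theorem adj_inl_inr (i : α) (j : β) : (gJoin G1 G2).Adj (.inl i) (.inr j) := by
  simp [gJoin]

@[simp]
theorem adj_inr_inl (i : β) (j : α) : (gJoin G1 G2).Adj (.inr i) (.inl j) := by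
  simp [gJoin]

variable [Fintype α] [Fintype β] [DecidableEq α] [DecidableEq β]
  [DecidableRel G1.Adj] [DecidableRel G2.Adj]

theorem sum_neighborFinset_inl {M : Type*} [AddCommMonoid M] (f : α ⊕ β → M) (i : α) :
    ∑ u ∈ (gJoin G1 G2).neighborFinset (.inl i), f u =
      ∑ j ∈ G1.neighborFinset i, f (.inl j) + ∑ k, f (.inr k) := by
  simp [SimpleGraph.neighborFinset_eq_filter, Finset.sum_filter, Fintype.sum_sum_type]

theorem sum_neighborFinset_inr {M : Type*} [AddCommMonoid M] (f : α ⊕ β → M) (i : β) :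
    ∑ u ∈ (gJoin G1 G2).neighborFinset (.inr i), f u =
      ∑ j, f (.inl j) + ∑ k ∈ G2.neighborFinset i, f (.inr k) := by
  simp [SimpleGraph.neighborFinset_eq_filter, Finset.sum_filter, Fintype.sum_sum_type]

theorem degree_inl (i : α) :
    (gJoin G1 G2).degree (.inl i) = G1.degree i + Fintype.card β := by
  rw [← SimpleGraph.card_neighborFinset_eq_degree, Finset.card_eq_sum_ones,
    sum_neighborFinset_inl]
  simp

theorem degree_inr (i : β) :
    (gJoin G1 G2).degree (.inr i) = Fintype.card α + G2.degree i := by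
  rw [← SimpleGraph.card_neighborFinset_eq_degree, Finset.card_eq_sum_ones,
    sum_neighborFinset_inr]
  simp

theorem signlessLaplacian_mulVec_elim_const {r1 r2 : ℕ} (h1 : G1.IsRegularOfDegree r1)
    (h2 : G2.IsRegularOfDegree r2) (a b : ℝ) :
    signlessLaplacian (gJoin G1 G2) *ᵥ Sum.elim (fun _ => a) (fun _ => b) =
      Sum.elim (fun _ => (Fintype.card β + 2 * r1) * a + Fintype.card β * b)
        (fun _ => Fintype.card α * a + (Fintype.card α + 2 * r2) * b) := by
  funext v
  cases v with
  | inl i =>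
    simp [signlessLaplacian_mulVec_apply, degree_inl, sum_neighborFinset_inl, h1 i]
    ring
  | inr i =>
    simp [signlessLaplacian_mulVec_apply, degree_inr, sum_neighborFinset_inr, h2 i]
    ring

end gJoin

/-- For `G1` an `r1`-regular graph on `n1` vertices, `G2` an
`r2`-regular graph on `n2` vertices and `G = G1 ∨ G2` their join, the `Q`-coronal of `G`
(the sum of all entries of `(lam I - Q)⁻¹`, for `lam` not an eigenvalue of `Q` and
avoiding the pole of the displayed rational function) equals
`((lam - n2 - 2r1) n2 + (lam - n1 - 2r2) n1 + 2 n1 n2) /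
  ((lam - n2 - 2r1)(lam - n1 - 2r2) - n1 n2)`. -/
theorem coronal_join_regular {n1 n2 r1 r2 : ℕ}
    (G1 : SimpleGraph (Fin n1)) (G2 : SimpleGraph (Fin n2))
    [DecidableRel G1.Adj] [DecidableRel G2.Adj]
    (h1 : G1.IsRegularOfDegree r1) (h2 : G2.IsRegularOfDegree r2) (lam : ℝ)
    (hreg : (lam • (1 : Matrix (Fin n1 ⊕ Fin n2) (Fin n1 ⊕ Fin n2) ℝ) -
        signlessLaplacian (gJoin G1 G2)).det ≠ 0)
    (hden : (lam - n2 - 2 * r1) * (lam - n1 - 2 * r2) - (n1 : ℝ) * n2 ≠ 0) :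
    ∑ i, ∑ j, (lam • (1 : Matrix (Fin n1 ⊕ Fin n2) (Fin n1 ⊕ Fin n2) ℝ) -
        signlessLaplacian (gJoin G1 G2))⁻¹ i j =
      ((lam - n2 - 2 * r1) * n2 + (lam - n1 - 2 * r2) * n1 + 2 * n1 * n2) /
        ((lam - n2 - 2 * r1) * (lam - n1 - 2 * r2) - n1 * n2) := by
  set D := (lam - n2 - 2 * r1) * (lam - n1 - 2 * r2) - (n1 : ℝ) * n2
  have hsolve : (lam • 1 - signlessLaplacian (gJoin G1 G2)) *ᵥ
      Sum.elim (fun _ => (lam - n1 - 2 * r2 + n2) / D) (fun _ => (lam - n2 - 2 * r1 + n1) / D) =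
        fun _ => 1 := by
    rw [sub_mulVec, smul_mulVec, one_mulVec, gJoin.signlessLaplacian_mulVec_elim_const G1 G2 h1 h2]
    funext v
    cases v <;> simp <;> field_simp <;> ring
  rw [sum_sum_inv_apply_eq_sum_of_mulVec_eq_one hreg hsolve, Fintype.sum_sum_type]
  simp
  field_simp
  ring
end

section
/- Let G = K_{n_1,...,n_k} be the complete multipartite graph with parts of sizes n_1,...,n_k and n = n_1 + ... + n_k vertices. Then its Q-coronal satisfies Γ_Q(λ) = ((Σ_{i=1}^k n_i/(λ - n + 2n_i))^{-1} - 1)^{-1}, for λ avoiding poles. -/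
open Matrix BigOperators

instance {k : ℕ} (m : Fin k → ℕ) :
    DecidableRel (SimpleGraph.completeMultipartiteGraph (fun i => Fin (m i))).Adj := fun x y =>
  inferInstanceAs (Decidable (x.1 ≠ y.1))

/-! On vectors that are constant on each part, `λI - Q` acts on part `i` as
`c ↦ d_i c_i - Σ_j n_j c_j`, where `d_i = λ - n + 2 n_i`. Hence the vector equal to `s / d_i` on
part `i` is mapped to the constant vector `s (1 - T)`, with `T = Σ_i n_i / d_i`. For `s = 1` this
shows `T ≠ 1` when `λI - Q` is invertible, since that vector has entry sum `T ≠ 0`; for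
`s = (1 - T)⁻¹` it solves `(λI - Q) x = 1`, so `1ᵀ(λI - Q)⁻¹1 = Σ_v x_v = T / (1 - T)`. -/

theorem Fintype.sum_sigma_fst {ι : Type*} [Fintype ι] {V : ι → Type*} [∀ i, Fintype (V i)]
    {M : Type*} [AddCommMonoid M] (c : ι → M) :
    ∑ v : Σ i, V i, c v.1 = ∑ i, Fintype.card (V i) • c i := by
  simp [Fintype.sum_sigma]

theorem Matrix.sum_sum_inv_eq_sum_of_mulVec_eq_one {n K : Type*} [Fintype n] [DecidableEq n]
    [Field K] {M : Matrix n n K} (hM : IsUnit M.det) {x : n → K} (hx : M *ᵥ x = fun _ => 1) :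
    ∑ i, ∑ j, M⁻¹ i j = ∑ i, x i := by
  have hinv : M⁻¹ *ᵥ (fun _ => 1) = x := by
    rw [← hx, mulVec_mulVec, nonsing_inv_mul M hM, one_mulVec]
  simp [← hinv, mulVec, dotProduct]

namespace SimpleGraph

variable {ι : Type*} [Fintype ι] {V : ι → Type*} [∀ i, Fintype (V i)]
  [DecidableRel (completeMultipartiteGraph V).Adj]

theorem sum_neighborFinset_completeMultipartiteGraph {M : Type*} [AddCommGroup M]
    (c : ι → M) (v : Σ i, V i) :
    ∑ w ∈ (completeMultipartiteGraph V).neighborFinset v, c w.1 =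
      ∑ i, Fintype.card (V i) • c i - Fintype.card (V v.1) • c v.1 := by
  classical
  have hsplit (w : Σ i, V i) : c w.1 =
      (if (completeMultipartiteGraph V).Adj v w then c w.1 else 0) +
        if v.1 = w.1 then c w.1 else 0 := by
    by_cases h : v.1 = w.1 <;> simp [h]
  rw [neighborFinset_eq_filter, Finset.sum_filter, ← Fintype.sum_sigma_fst, eq_sub_iff_add_eq,
    Fintype.sum_congr _ _ hsplit, Finset.sum_add_distrib]
  simp [Fintype.sum_sigma]

theorem degree_completeMultipartiteGraph {R : Type*} [AddCommGroupWithOne R] (v : Σ i, V i) :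
    ((completeMultipartiteGraph V).degree v : R) =
      ∑ i, (Fintype.card (V i) : R) - Fintype.card (V v.1) := by
  rw [← card_neighborFinset_eq_degree, Finset.card_eq_sum_ones, Nat.cast_sum, Nat.cast_one,
    sum_neighborFinset_completeMultipartiteGraph (fun _ => (1 : R))]
  simp only [nsmul_one]

end SimpleGraph

open SimpleGraph

variable {ι : Type*} [Fintype ι] {V : ι → Type*} [∀ i, Fintype (V i)] [DecidableEq (Σ i, V i)]
  [DecidableRel (completeMultipartiteGraph V).Adj]

theorem signlessLaplacian_completeMultipartiteGraph_mulVec_apply (c : ι → ℝ) (v : Σ i, V i) :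
    (signlessLaplacian (completeMultipartiteGraph V) *ᵥ fun w => c w.1) v =
      (∑ i, (Fintype.card (V i) : ℝ) - 2 * Fintype.card (V v.1)) * c v.1 +
        ∑ i, (Fintype.card (V i) : ℝ) * c i := by
  rw [signlessLaplacian, add_mulVec, Pi.add_apply, mulVec_diagonal, adjMatrix_mulVec_apply,
    degree_completeMultipartiteGraph (R := ℝ), sum_neighborFinset_completeMultipartiteGraph]
  simp only [nsmul_eq_mul]
  ring

theorem smul_one_sub_signlessLaplacian_completeMultipartiteGraph_mulVec (lam s : ℝ)
    (hpole : ∀ i, lam - ∑ j, (Fintype.card (V j) : ℝ) + 2 * Fintype.card (V i) ≠ 0) :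
    (lam • 1 - signlessLaplacian (completeMultipartiteGraph V)) *ᵥ
        (fun w => s / (lam - ∑ j, (Fintype.card (V j) : ℝ) + 2 * Fintype.card (V w.1))) =
      fun _ => s * (1 - ∑ i, (Fintype.card (V i) : ℝ) /
        (lam - ∑ j, (Fintype.card (V j) : ℝ) + 2 * Fintype.card (V i))) := by
  ext v
  rw [sub_mulVec, smul_mulVec, one_mulVec, Pi.sub_apply, Pi.smul_apply,
    signlessLaplacian_completeMultipartiteGraph_mulVec_apply
      (fun i => s / (lam - ∑ j, (Fintype.card (V j) : ℝ) + 2 * Fintype.card (V i))),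
    mul_sub, Finset.mul_sum]
  have hd := hpole v.1
  simp only [smul_eq_mul, mul_div, mul_comm s]
  field_simp
  ring

/-- Let `G = K_{m 1, ..., m k}` be the complete multipartite graph with
parts of sizes `m i` and `n = Σ m i` vertices, and `Q` its signless Laplacian.  For `lam`
not an eigenvalue of `Q` and avoiding poles of the displayed expression, the `Q`-coronal
satisfies `Γ_Q(lam) = ((Σ_i m i / (lam - n + 2 m i))⁻¹ - 1)⁻¹`. -/
theorem coronal_completeMultipartite {k : ℕ} (m : Fin k → ℕ) (lam : ℝ)
    (hreg : (lam • (1 : Matrix ((i : Fin k) × Fin (m i)) ((i : Fin k) × Fin (m i)) ℝ) -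
        signlessLaplacian (SimpleGraph.completeMultipartiteGraph (fun i => Fin (m i)))).det ≠ 0)
    (hpole : ∀ i, lam - (∑ i, (m i : ℝ)) + 2 * m i ≠ 0)
    (hsum : (∑ i, (m i : ℝ) / (lam - (∑ i, (m i : ℝ)) + 2 * m i)) ≠ 0) :
    ∑ i, ∑ j,
        (lam • (1 : Matrix ((i : Fin k) × Fin (m i)) ((i : Fin k) × Fin (m i)) ℝ) -
          signlessLaplacian (SimpleGraph.completeMultipartiteGraph (fun i => Fin (m i))))⁻¹ i j =
      ((∑ i, (m i : ℝ) / (lam - (∑ i, (m i : ℝ)) + 2 * m i))⁻¹ - 1)⁻¹ := by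
  set T := ∑ i, (m i : ℝ) / (lam - (∑ i, (m i : ℝ)) + 2 * m i)
  have hres (s : ℝ) :=
    smul_one_sub_signlessLaplacian_completeMultipartiteGraph_mulVec (V := fun i => Fin (m i))
      lam s (by simpa only [Fintype.card_fin] using hpole)
  simp only [Fintype.card_fin] at hres
  have hsum_entries (s : ℝ) :
      ∑ w : (i : Fin k) × Fin (m i), s / (lam - ∑ i, (m i : ℝ) + 2 * m w.1) = s * T := by
    rw [Fintype.sum_sigma_fst (V := fun i => Fin (m i))
      fun i => s / (lam - ∑ i, (m i : ℝ) + 2 * m i), Finset.mul_sum]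
    exact Finset.sum_congr rfl fun i _ => by rw [Fintype.card_fin, nsmul_eq_mul]; ring
  have hT : 1 - T ≠ 0 := by
    intro hT1
    have hzero := eq_zero_of_mulVec_eq_zero hreg ((hres 1).trans (by rw [hT1, mul_zero]; rfl))
    apply hsum
    calc T = ∑ w : (i : Fin k) × Fin (m i), 1 / (lam - ∑ i, (m i : ℝ) + 2 * m w.1) := by
          rw [hsum_entries, one_mul]
      _ = 0 := by rw [hzero]; simp
  rw [sum_sum_inv_eq_sum_of_mulVec_eq_one (isUnit_iff_ne_zero.mpr hreg)
    ((hres (1 - T)⁻¹).trans (by rw [inv_mul_cancel₀ hT])), hsum_entries]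
  field_simp
end

section
/- Let G_1 and G_2 be simple graphs on n_1 and n_2 vertices with signless Laplacians Q_1 and Q_2, and let G = G_1 ∘ G_2 be the corona. Then the signless Laplacian characteristic polynomial of G is f_Q(λ) = (f_{Q_2}(λ-1))^{n_1} · f_{Q_1}(λ - n_2 - Γ_{Q_2}(λ-1)), where Γ_{Q_2} is the Q_2-coronal of G_2. -/
/-!
Order the vertices of `G1 ∘ G2` as `G1` first, then the copies of `G2`. Then
`Q(G1 ∘ G2) = [[Q1 + n2 I, J], [Jᵀ, I ⊗ (Q2 + I)]]`, where `J` joins each vertex of `G1`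
to its copy. For `λ - 1` not an eigenvalue of `Q2` the lower right block of `λ I - Q` is invertible, and
its Schur complement is `(λ - n2) I - Q1 - J (I ⊗ ((λ - 1) I - Q2)⁻¹) Jᵀ`. Since
`J (I ⊗ M) Jᵀ` is the sum of the entries of `M` times the identity, this complement is
`(λ - n2 - Γ_{Q2}(λ - 1)) I - Q1`.
-/

open Matrix BigOperators

/-- The corona `G1 ∘ G2`: one copy of `G1` together with `n1` copies of `G2`, where the
`i`-th vertex of `G1` is joined to every vertex of the `i`-th copy of `G2`. -/
def corona {α β : Type*} (G1 : SimpleGraph α) (G2 : SimpleGraph β) :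
    SimpleGraph (α ⊕ α × β) where
  Adj x y := match x, y with
    | Sum.inl a, Sum.inl b => G1.Adj a b
    | Sum.inl a, Sum.inr (b, _) => a = b
    | Sum.inr (a, _), Sum.inl b => a = b
    | Sum.inr (a, u), Sum.inr (b, v) => a = b ∧ G2.Adj u v
  symm := ⟨by
    rintro (a | ⟨a, u⟩) (b | ⟨b, v⟩) h
    · exact G1.adj_symm h
    · exact h.symm
    · exact h.symm
    · exact ⟨h.1.symm, G2.adj_symm h.2⟩⟩
  loopless := ⟨by
    rintro (a | ⟨a, u⟩) h
    · exact G1.irrefl h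
    · exact G2.irrefl h.2⟩

instance {α β : Type*} [DecidableEq α] (G1 : SimpleGraph α) (G2 : SimpleGraph β)
    [DecidableRel G1.Adj] [DecidableRel G2.Adj] : DecidableRel (corona G1 G2).Adj :=
  fun x y =>
  match x, y with
  | Sum.inl a, Sum.inl b => inferInstanceAs (Decidable (G1.Adj a b))
  | Sum.inl a, Sum.inr (b, _) => inferInstanceAs (Decidable (a = b))
  | Sum.inr (a, _), Sum.inl b => inferInstanceAs (Decidable (a = b))
  | Sum.inr (a, u), Sum.inr (b, v) => inferInstanceAs (Decidable (a = b ∧ G2.Adj u v))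

open scoped Kronecker

namespace Matrix

variable {R m n : Type*} [Ring R] [DecidableEq m] [DecidableEq n]

theorem smul_one_sub_fromBlocks (r : R) (A : Matrix m m R) (B : Matrix m n R)
    (C : Matrix n m R) (D : Matrix n n R) :
    r • (1 : Matrix (m ⊕ n) (m ⊕ n) R) - fromBlocks A B C D =
      fromBlocks (r • 1 - A) (-B) (-C) (r • 1 - D) := by
  rw [← fromBlocks_one, fromBlocks_smul]
  ext (i | i) (j | j) <;> simp

theorem smul_one_sub_one_kronecker (r : R) (M : Matrix n n R) :
    r • (1 : Matrix (m × n) (m × n) R) - (1 : Matrix m m R) ⊗ₖ M =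
      1 ⊗ₖ (r • 1 - M) := by
  ext ⟨a, u⟩ ⟨b, v⟩
  by_cases hab : a = b <;> simp [one_apply, hab]

end Matrix

section JoinMatrix

variable (α β R : Type*) [DecidableEq α]

def coronaJoinMatrix [Zero R] [One R] : Matrix α (α × β) R :=
  Matrix.of fun a p => if a = p.1 then 1 else 0

variable {α β R} [Fintype α] [Fintype β] [CommRing R]

theorem coronaJoinMatrix_mul_one_kronecker_mul_transpose (M : Matrix β β R) :
    coronaJoinMatrix α β R * ((1 : Matrix α α R) ⊗ₖ M) * (coronaJoinMatrix α β R)ᵀ =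
      (∑ i, ∑ j, M i j) • 1 := by
  ext a b
  simp [coronaJoinMatrix, mul_apply, one_apply, Fintype.sum_prod_type, Finset.sum_comm (γ := β)]

theorem det_fromBlocks_neg_coronaJoinMatrix_one_kronecker [DecidableEq β] (A : Matrix α α R)
    (S : Matrix β β R) (hS : IsUnit S.det) :
    (fromBlocks A (-coronaJoinMatrix α β R) (-(coronaJoinMatrix α β R)ᵀ)
        ((1 : Matrix α α R) ⊗ₖ S)).det =
      S.det ^ Fintype.card α * (A - (∑ i, ∑ j, S⁻¹ i j) • 1).det := by
  have hD : IsUnit ((1 : Matrix α α R) ⊗ₖ S).det := by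
    simpa [det_kronecker] using hS.pow (Fintype.card α)
  let := invertibleOfIsUnitDet _ hD
  rw [det_fromBlocks₂₂, invOf_eq_nonsing_inv, inv_kronecker, inv_one, Matrix.neg_mul,
    Matrix.neg_mul, Matrix.mul_neg, neg_neg, coronaJoinMatrix_mul_one_kronecker_mul_transpose,
    det_kronecker, det_one, one_pow, one_mul]

end JoinMatrix

section Corona

variable {α β : Type*}

section Adj

variable (G1 : SimpleGraph α) (G2 : SimpleGraph β)

@[simp]
theorem corona_adj_inl_inl {a b : α} : (corona G1 G2).Adj (.inl a) (.inl b) ↔ G1.Adj a b := .rfl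

@[simp]
theorem corona_adj_inl_inr {a : α} {p : α × β} :
    (corona G1 G2).Adj (.inl a) (.inr p) ↔ a = p.1 := .rfl

@[simp]
theorem corona_adj_inr_inl {p : α × β} {b : α} :
    (corona G1 G2).Adj (.inr p) (.inl b) ↔ p.1 = b := .rfl

@[simp]
theorem corona_adj_inr_inr {p q : α × β} :
    (corona G1 G2).Adj (.inr p) (.inr q) ↔ p.1 = q.1 ∧ G2.Adj p.2 q.2 := .rfl

end Adj

variable [DecidableEq α] [Fintype α] [Fintype β]
  (G1 : SimpleGraph α) (G2 : SimpleGraph β) [DecidableRel G1.Adj] [DecidableRel G2.Adj]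

theorem corona_neighborFinset_inl (a : α) :
    (corona G1 G2).neighborFinset (.inl a) =
      (G1.neighborFinset a).disjSum (Finset.univ.map (Function.Embedding.sectR a β)) := by
  ext (b | ⟨b, v⟩) <;> simp [eq_comm]

theorem corona_neighborFinset_inr (p : α × β) :
    (corona G1 G2).neighborFinset (.inr p) =
      ({p.1} : Finset α).disjSum
        ((G2.neighborFinset p.2).map (Function.Embedding.sectR p.1 β)) := by
  ext (b | ⟨b, v⟩) <;> simp [eq_comm, and_comm]

theorem corona_degree_inl (a : α) :
    (corona G1 G2).degree (.inl a) = G1.degree a + Fintype.card β := by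
  simp [← SimpleGraph.card_neighborFinset_eq_degree, corona_neighborFinset_inl]

theorem corona_degree_inr (p : α × β) :
    (corona G1 G2).degree (.inr p) = G2.degree p.2 + 1 := by
  simp [← SimpleGraph.card_neighborFinset_eq_degree, corona_neighborFinset_inr, add_comm]

variable [DecidableEq β]

theorem signlessLaplacian_corona :
    signlessLaplacian (corona G1 G2) =
      fromBlocks (signlessLaplacian G1 + (Fintype.card β : ℝ) • 1) (coronaJoinMatrix α β ℝ)
        (coronaJoinMatrix α β ℝ)ᵀ (1 ⊗ₖ (signlessLaplacian G2 + 1)) := by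
  ext (a | ⟨a, u⟩) (b | ⟨b, v⟩)
  · simp only [signlessLaplacian, Matrix.add_apply, diagonal_apply, Sum.inl.injEq,
      corona_degree_inl, Nat.cast_add, SimpleGraph.adjMatrix_apply, corona_adj_inl_inl,
      fromBlocks_apply₁₁, Matrix.smul_apply, one_apply, smul_eq_mul, mul_ite, mul_one, mul_zero]
    split_ifs <;> simp_all
  · simp [signlessLaplacian, coronaJoinMatrix]
  · simp [signlessLaplacian, coronaJoinMatrix, eq_comm]
  · simp only [signlessLaplacian, Matrix.add_apply, diagonal_apply, Sum.inr.injEq, Prod.mk.injEq,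
      corona_degree_inr, Nat.cast_add, Nat.cast_one, SimpleGraph.adjMatrix_apply,
      corona_adj_inr_inr, fromBlocks_apply₂₂, kroneckerMap_apply, one_apply, ite_mul, one_mul,
      zero_mul]
    split_ifs <;> simp_all

theorem smul_one_sub_signlessLaplacian_corona (r : ℝ) :
    r • 1 - signlessLaplacian (corona G1 G2) =
      fromBlocks ((r - Fintype.card β) • 1 - signlessLaplacian G1) (-coronaJoinMatrix α β ℝ)
        (-(coronaJoinMatrix α β ℝ)ᵀ) (1 ⊗ₖ ((r - 1) • 1 - signlessLaplacian G2)) := by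
  rw [signlessLaplacian_corona, smul_one_sub_fromBlocks, smul_one_sub_one_kronecker]
  congr 1
  · module
  · congr 1
    module

end Corona

/-- For graphs `G1`, `G2` on `n1`, `n2` vertices with signless
Laplacians `Q1`, `Q2` and corona `G = G1 ∘ G2`, whenever `lam - 1` is not an eigenvalue
of `Q2`, the signless Laplacian characteristic polynomial of `G` is
`f_Q(lam) = f_{Q2}(lam - 1)^{n1} * f_{Q1}(lam - n2 - Γ_{Q2}(lam - 1))`, where
`Γ_{Q2}` is the `Q2`-coronal of `G2` (the sum of all entries of `((lam-1) I - Q2)⁻¹`). -/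
theorem charpoly_corona {n1 n2 : ℕ}
    (G1 : SimpleGraph (Fin n1)) (G2 : SimpleGraph (Fin n2))
    [DecidableRel G1.Adj] [DecidableRel G2.Adj] (lam : ℝ)
    (h2 : (((lam - 1) • (1 : Matrix (Fin n2) (Fin n2) ℝ)) - signlessLaplacian G2).det ≠ 0) :
    (lam • (1 : Matrix (Fin n1 ⊕ Fin n1 × Fin n2) (Fin n1 ⊕ Fin n1 × Fin n2) ℝ) -
        signlessLaplacian (corona G1 G2)).det =
      ((((lam - 1) • (1 : Matrix (Fin n2) (Fin n2) ℝ)) - signlessLaplacian G2).det) ^ n1 *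
        (((lam - n2 -
            ∑ i, ∑ j,
              (((lam - 1) • (1 : Matrix (Fin n2) (Fin n2) ℝ)) -
                  signlessLaplacian G2)⁻¹ i j) •
            (1 : Matrix (Fin n1) (Fin n1) ℝ) - signlessLaplacian G1).det) := by
  rw [smul_one_sub_signlessLaplacian_corona, det_fromBlocks_neg_coronaJoinMatrix_one_kronecker _ _
    (isUnit_iff_ne_zero.mpr h2), Fintype.card_fin, Fintype.card_fin]
  congr 2
  module
end
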